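/- The higher-order problem on time scales has no abnormal extremals: the abnormal adjoint system has only the trivial solution. Let r ≥ 1 and assume 𝕋 has at least 2r+1 points; set 𝕋' = [a, ρ^{r−1}(b)] ∩ 𝕋₀. Suppose ψ^0, …, ψ^{r−1} : 𝕋' → ℝⁿ are delta differentiable at every t ∈ (𝕋')^k and satisfy, for all t ∈ (𝕋')^k: (ψ^0)^Δ(t) = 0; (ψ^i)^Δ(t) = −ψ^{i−1}(σ(t)) for i = 1, …, r−1; and ψ^{r−1}(σ(t)) = 0. Then ψ^i(t) = 0 for every i ∈ {0, …, r−1} and every t ∈ (𝕋')^k. -/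
import Mathlib


open Set Filter

noncomputable section

-- Forward jump operator of the set `S`.
open Classical in
def tsSigma (S : Set ℝ) (t : ℝ) : ℝ :=
  if ({s | s ∈ S ∧ t < s}).Nonempty then sInf {s | s ∈ S ∧ t < s} else t

-- Backward jump operator of the set `S`.
open Classical in
def tsRho (S : Set ℝ) (t : ℝ) : ℝ :=
  if ({s | s ∈ S ∧ s < t}).Nonempty then sSup {s | s ∈ S ∧ s < t} else t

/-- Graininess function. -/
def tsMu (S : Set ℝ) (t : ℝ) : ℝ := tsSigma S t - t

/-- `S^k = S \ (ρ(max S), max S]`. -/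
def tsTk (S : Set ℝ) : Set ℝ := S \ Set.Ioc (tsRho S (sSup S)) (sSup S)

/-- Delta differentiability at `t` of `f` regarded as a function on the time scale `S`,
with delta derivative `d`. -/
def deltaDiffAt {E : Type*} [NormedAddCommGroup E] [NormedSpace ℝ E]
    (S : Set ℝ) (f : ℝ → E) (t : ℝ) (d : E) : Prop :=
  ∀ ε > 0, ∃ δ > 0, ∀ s ∈ S ∩ Set.Ioo (t - δ) (t + δ),
    ‖f (tsSigma S t) - f s - (tsSigma S t - s) • d‖ ≤ ε * |tsSigma S t - s|

/-- rd-continuity of `f` on its domain `S`: continuity (within `S`) at right-dense points and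
existence of a finite left-sided limit along `S` at left-dense points. -/
def RdContinuousOn {E : Type*} [NormedAddCommGroup E]
    (S : Set ℝ) (f : ℝ → E) : Prop :=
  ∀ t ∈ S, (tsSigma S t = t → ContinuousWithinAt f S t) ∧
    (tsRho S t = t → ∃ l : E, Filter.Tendsto f (nhdsWithin t (S ∩ Set.Iio t)) (nhds l))

/-- `y ∈ C¹_rd(T)`, with delta derivative `yd`. -/
def C1rd {E : Type*} [NormedAddCommGroup E] [NormedSpace ℝ E]
    (T : Set ℝ) (y yd : ℝ → E) : Prop :=
  (∀ t ∈ tsTk T, deltaDiffAt T y t (yd t)) ∧ RdContinuousOn (tsTk T) yd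

/-- `F` is a delta antiderivative of `f` on the time scale `S`; the delta integral
`∫_c^d f Δt` is `F d - F c` for any such `F`. -/
def IsDeltaAntideriv {E : Type*} [NormedAddCommGroup E] [NormedSpace ℝ E]
    (S : Set ℝ) (f F : ℝ → E) : Prop :=
  ∀ t ∈ tsTk S, deltaDiffAt S F t (f t)

/-- Sup norm of `f` over the set `S`. -/
def tsSupNorm {E : Type*} [NormedAddCommGroup E] (S : Set ℝ) (f : ℝ → E) : ℝ :=
  sSup ((fun t => ‖f t‖) '' S)

abbrev En (n : ℕ) : Type := EuclideanSpace ℝ (Fin n)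

namespace HOATS

set_option linter.unusedVariables false
set_option linter.unusedSectionVars false

lemma le_tsSigma (S : Set ℝ) (t : ℝ) : t ≤ tsSigma S t := by
  unfold tsSigma; split_ifs with h
  · exact le_csInf h (fun x hx => le_of_lt hx.2)
  · exact le_refl t

lemma tsSigma_mem {S : Set ℝ} (hS : IsClosed S) {t : ℝ} (ht : t ∈ S) : tsSigma S t ∈ S := by
  unfold tsSigma; split_ifs with h
  · have h1 : BddBelow {s | s ∈ S ∧ t < s} := ⟨t, fun x hx => le_of_lt hx.2⟩
    have h2 := csInf_mem_closure h h1
    have h3 : closure {s | s ∈ S ∧ t < s} ⊆ S := by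
      calc closure {s | s ∈ S ∧ t < s} ⊆ closure S :=
            closure_mono (fun x hx => hx.1)
        _ = S := hS.closure_eq
    exact h3 h2
  · exact ht

lemma tsSigma_le {S : Set ℝ} {t u : ℝ} (hu : u ∈ S) (htu : t < u) : tsSigma S t ≤ u := by
  unfold tsSigma
  rw [if_pos ⟨u, hu, htu⟩]
  exact csInf_le ⟨t, fun x hx => le_of_lt hx.2⟩ ⟨hu, htu⟩

lemma tsSigma_max {S : Set ℝ} {M : ℝ} (hub : ∀ u ∈ S, u ≤ M) : tsSigma S M = M := by
  unfold tsSigma; split_ifs with h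
  · obtain ⟨u, huS, hMu⟩ := h
    exact absurd (hub u huS) (not_le.2 hMu)
  · rfl

lemma tsRho_le (S : Set ℝ) (t : ℝ) : tsRho S t ≤ t := by
  unfold tsRho; split_ifs with h
  · exact csSup_le h (fun x hx => le_of_lt hx.2)
  · exact le_refl t

lemma tsRho_mem {S : Set ℝ} (hS : IsClosed S) {t : ℝ} (ht : t ∈ S) : tsRho S t ∈ S := by
  unfold tsRho; split_ifs with h
  · have h1 : BddAbove {s | s ∈ S ∧ s < t} := ⟨t, fun x hx => le_of_lt hx.2⟩
    have h2 := csSup_mem_closure h h1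
    have h3 : closure {s | s ∈ S ∧ s < t} ⊆ S := by
      calc closure {s | s ∈ S ∧ s < t} ⊆ closure S :=
            closure_mono (fun x hx => hx.1)
        _ = S := hS.closure_eq
    exact h3 h2
  · exact ht

lemma le_tsRho {S : Set ℝ} {u t : ℝ} (hu : u ∈ S) (hut : u < t) : u ≤ tsRho S t := by
  unfold tsRho
  rw [if_pos ⟨u, hu, hut⟩]
  exact le_csSup ⟨t, fun x hx => le_of_lt hx.2⟩ ⟨hu, hut⟩

lemma tsSigma_tsRho_max {S : Set ℝ} {M : ℝ} (hM : M ∈ S)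
    (hlt : tsRho S M < M) : tsSigma S (tsRho S M) = M := by
  have hne : {s | s ∈ S ∧ tsRho S M < s}.Nonempty := ⟨M, hM, hlt⟩
  unfold tsSigma
  rw [if_pos hne]
  apply le_antisymm
  · exact csInf_le ⟨tsRho S M, fun x hx => le_of_lt hx.2⟩ ⟨hM, hlt⟩
  · apply le_csInf hne
    intro u hu
    by_contra hc
    push_neg at hc
    exact absurd (le_tsRho hu.1 hc) (not_le.2 hu.2)

lemma mem_tsTk_of_lt {S : Set ℝ} (hbdd : BddAbove S) {t : ℝ} (ht : t ∈ S)
    (hlt : t < sSup S) : t ∈ tsTk S := by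
  refine ⟨ht, ?_⟩
  rintro ⟨h1, _⟩
  exact absurd (le_tsRho ht hlt) (not_le.2 h1)

lemma mem_tsTk_of_rho_max {S : Set ℝ} (h : tsRho S (sSup S) = sSup S) {t : ℝ}
    (ht : t ∈ S) : t ∈ tsTk S := by
  refine ⟨ht, ?_⟩
  rintro ⟨h1, h2⟩
  rw [h] at h1
  exact absurd h2 (not_le.2 h1)

lemma mem_tsTk_of_le {S : Set ℝ} (hbdd : BddAbove S) {t s : ℝ} (ht : t ∈ tsTk S)
    (hs : s ∈ S) (hst : s ≤ t) : s ∈ tsTk S := by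
  refine ⟨hs, ?_⟩
  rintro ⟨h1, _⟩
  exact ht.2 ⟨lt_of_lt_of_le h1 hst, le_csSup hbdd ht.1⟩


section ELemmas

variable {E : Type*} [NormedAddCommGroup E] [NormedSpace ℝ E]

lemma norm_eq_zero_of_forall {v : E} (h : ∀ ε : ℝ, 0 < ε → ‖v‖ ≤ ε) : v = 0 := by
  rw [← norm_le_zero_iff]
  exact le_of_forall_pos_le_add (by intro ε hε; simpa using h ε hε)

lemma norm_eq_zero_of_forall_mul {v : E} {C : ℝ} (hC : 0 ≤ C)
    (h : ∀ ε : ℝ, 0 < ε → ‖v‖ ≤ ε * C) : v = 0 := by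
  apply norm_eq_zero_of_forall
  intro ε hε
  have h1 := h (ε / (C + 1)) (by positivity)
  have h2 : ε / (C + 1) * C ≤ ε := by
    rw [div_mul_eq_mul_div, div_le_iff₀ (by linarith)]
    nlinarith
  linarith

/-- Exact jump formula. -/
lemma jump_eq {S : Set ℝ} {f : ℝ → E} {t : ℝ} {d : E} (ht : t ∈ S)
    (hd : deltaDiffAt S f t d) :
    f (tsSigma S t) = f t + (tsSigma S t - t) • d := by
  have key : f (tsSigma S t) - f t - (tsSigma S t - t) • d = 0 := by
    apply norm_eq_zero_of_forall_mul (abs_nonneg (tsSigma S t - t))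
    intro ε hε
    obtain ⟨δ, hδ0, hδ⟩ := hd ε hε
    exact hδ t ⟨ht, by constructor <;> linarith⟩
  have := sub_eq_zero.1 key
  rw [sub_eq_iff_eq_add] at this
  rw [this]
  abel


/-- Left continuity from delta differentiability. -/
lemma left_cont {S : Set ℝ} {f : ℝ → E} {t : ℝ} {d : E} (ht : t ∈ S)
    (hd : deltaDiffAt S f t d) {η : ℝ} (hη : 0 < η) :
    ∃ δ > 0, ∀ s ∈ S, t - δ < s → s ≤ t → ‖f t - f s‖ ≤ η := by
  set μ := tsSigma S t - t with hμdef
  have hμ0 : 0 ≤ μ := sub_nonneg.2 (le_tsSigma S t)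
  obtain ⟨δ, hδ0, hδ⟩ := hd (η / (2 * (μ + 1))) (by positivity)
  refine ⟨min (min δ 1) (η / (2 * (‖d‖ + 1))), by positivity, ?_⟩
  intro s hsS hs1 hs2
  have hsδ : t - δ < s := by
    have := min_le_left (min δ 1) (η / (2 * (‖d‖ + 1)))
    have := min_le_left δ 1
    linarith
  have hs1' : t - 1 < s := by
    have := min_le_left (min δ 1) (η / (2 * (‖d‖ + 1)))
    have := min_le_right δ 1
    linarith
  have hsd : t - η / (2 * (‖d‖ + 1)) < s := by
    have := min_le_right (min δ 1) (η / (2 * (‖d‖ + 1)))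
    linarith
  have hX := hδ s ⟨hsS, hsδ, by linarith⟩
  have habs : |tsSigma S t - s| = μ + (t - s) := by
    rw [abs_of_nonneg (by linarith)]; ring
  rw [habs] at hX
  have hjump := jump_eq ht hd
  have hsplit : f t - f s =
      (f (tsSigma S t) - f s - (tsSigma S t - s) • d) + (t - s) • d := by
    rw [hjump, ← hμdef]
    have : (tsSigma S t - s) = μ + (t - s) := by rw [hμdef]; ring
    rw [this, add_smul]
    abel
  rw [hsplit]
  have h1 : ‖(f (tsSigma S t) - f s - (tsSigma S t - s) • d) + (t - s) • d‖
      ≤ ‖f (tsSigma S t) - f s - (tsSigma S t - s) • d‖ + ‖(t - s) • d‖ := norm_add_le _ _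
  have h2 : ‖(t - s) • d‖ = (t - s) * ‖d‖ := by
    rw [norm_smul, Real.norm_eq_abs, abs_of_nonneg (by linarith)]
  have h3 : η / (2 * (μ + 1)) * (μ + (t - s)) ≤ η / 2 := by
    rw [div_mul_eq_mul_div, div_le_div_iff₀ (by positivity) (by norm_num)]
    nlinarith
  have h4 : (t - s) * ‖d‖ ≤ η / 2 := by
    have hd0 : (0:ℝ) ≤ ‖d‖ := norm_nonneg d
    have hts : t - s ≤ η / (2 * (‖d‖ + 1)) := by linarith
    calc (t - s) * ‖d‖ ≤ η / (2 * (‖d‖ + 1)) * ‖d‖ := by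
          apply mul_le_mul_of_nonneg_right hts hd0
      _ ≤ η / 2 := by
          rw [div_mul_eq_mul_div, div_le_div_iff₀ (by positivity) (by norm_num)]
          nlinarith
  calc ‖(f (tsSigma S t) - f s - (tsSigma S t - s) • d) + (t - s) • d‖
      ≤ ‖f (tsSigma S t) - f s - (tsSigma S t - s) • d‖ + ‖(t - s) • d‖ := h1
    _ ≤ η / (2 * (μ + 1)) * (μ + (t - s)) + (t - s) * ‖d‖ := by
        rw [h2]; exact add_le_add hX (le_refl _)
    _ ≤ η / 2 + η / 2 := add_le_add h3 h4
    _ = η := by ring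

/-- Zero derivative from vanishing to the right. -/
lemma deriv_zero_of_vanish {S : Set ℝ} {f : ℝ → E} {t : ℝ} {d : E} (hS : IsClosed S)
    (ht : t ∈ S) (hne : ∃ u, u ∈ S ∧ t < u) (hd : deltaDiffAt S f t d)
    (h0 : ∀ s ∈ S, t < s → f s = 0) (h0t : tsSigma S t = t ∨ f t = 0) : d = 0 := by
  have hne' : {s | s ∈ S ∧ t < s}.Nonempty := hne
  have hσinf : tsSigma S t = sInf {s | s ∈ S ∧ t < s} := by
    unfold tsSigma; rw [if_pos hne']
  rcases lt_or_eq_of_le (le_tsSigma S t) with hσ | hσ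
  · -- right-scattered
    have hft : f t = 0 := by
      rcases h0t with h | h
      · exfalso; rw [h] at hσ; exact lt_irrefl _ hσ
      · exact h
    have hfσ : f (tsSigma S t) = 0 := h0 _ (tsSigma_mem hS ht) hσ
    have hj := jump_eq ht hd
    rw [hfσ, hft, zero_add] at hj
    rcases smul_eq_zero.1 hj.symm with h | h
    · exfalso; have : tsSigma S t = t := by linarith [sub_eq_zero.1 h]
      rw [this] at hσ; exact lt_irrefl _ hσ
    · exact h
  · -- right-dense
    have happrox : ∀ δ : ℝ, 0 < δ → ∃ s, s ∈ S ∧ t < s ∧ s < t + δ := by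
      intro δ hδ
      obtain ⟨s, hs, hlt⟩ := exists_lt_of_csInf_lt hne'
        (show sInf {s | s ∈ S ∧ t < s} < t + δ by rw [← hσinf, ← hσ]; linarith)
      exact ⟨s, hs.1, hs.2, hlt⟩
    have hft : f t = 0 := by
      apply norm_eq_zero_of_forall
      intro η hη
      obtain ⟨δ, hδ0, hδ⟩ := hd 1 one_pos
      obtain ⟨s, hsS, hts, hlt⟩ := happrox (min δ (η / (1 + ‖d‖)))
        (lt_min hδ0 (by positivity))
      have hsδ : s < t + δ := lt_of_lt_of_le hlt (by
        have := min_le_left δ (η / (1 + ‖d‖)); linarith)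
      have hsd : s < t + η / (1 + ‖d‖) := lt_of_lt_of_le hlt (by
        have := min_le_right δ (η / (1 + ‖d‖)); linarith)
      have hcl := hδ s ⟨hsS, by constructor <;> linarith⟩
      rw [← hσ, h0 s hsS hts, sub_zero] at hcl
      have habs : |t - s| = s - t := by
        rw [abs_of_nonpos (by linarith)]; ring
      rw [habs, one_mul] at hcl
      have h5 : ‖f t‖ ≤ ‖f t - (t - s) • d‖ + ‖(t - s) • d‖ := by
        calc ‖f t‖ = ‖(f t - (t - s) • d) + (t - s) • d‖ := by congr 1; abel
          _ ≤ _ := norm_add_le _ _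
      have h6 : ‖(t - s) • d‖ = (s - t) * ‖d‖ := by
        rw [norm_smul, Real.norm_eq_abs, habs]
      have h7 : s - t ≤ η / (1 + ‖d‖) := by linarith
      have h8 : (s - t) * (1 + ‖d‖) ≤ η := by
        calc (s - t) * (1 + ‖d‖) ≤ η / (1 + ‖d‖) * (1 + ‖d‖) := by
              apply mul_le_mul_of_nonneg_right h7 (by positivity)
          _ = η := by field_simp
      calc ‖f t‖ ≤ (s - t) + (s - t) * ‖d‖ := by rw [h6] at h5; linarith
        _ = (s - t) * (1 + ‖d‖) := by ring
        _ ≤ η := h8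
    apply norm_eq_zero_of_forall
    intro ε hε
    obtain ⟨δ, hδ0, hδ⟩ := hd ε hε
    obtain ⟨s, hsS, hts, hlt⟩ := happrox δ hδ0
    have hcl := hδ s ⟨hsS, by constructor <;> linarith⟩
    rw [← hσ, h0 s hsS hts, hft] at hcl
    have habs : |t - s| = s - t := by rw [abs_of_nonpos (by linarith)]; ring
    rw [habs, sub_zero, zero_sub, norm_neg, norm_smul, Real.norm_eq_abs, habs] at hcl
    have hst : 0 < s - t := by linarith
    nlinarith [hcl, hst]


/-- Constancy from zero delta derivative. -/
lemma eq_of_deriv_zero {S : Set ℝ} {f : ℝ → E} (hS : IsClosed S)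
    {x y : ℝ} (hx : x ∈ S) (hy : y ∈ S) (hxy : x ≤ y)
    (hder : ∀ t ∈ S, x ≤ t → t < y → deltaDiffAt S f t 0)
    (hdy : ∃ d, deltaDiffAt S f y d) : f x = f y := by
  have main : ∀ ε : ℝ, 0 < ε → ‖f y - f x‖ ≤ ε * (y - x) := by
    intro ε hε
    set A := {s : ℝ | s ∈ S ∧ x ≤ s ∧ s ≤ y ∧ ‖f s - f x‖ ≤ ε * (s - x)} with hA
    have hxA : x ∈ A := ⟨hx, le_refl x, hxy, by simp⟩
    have hAne : A.Nonempty := ⟨x, hxA⟩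
    have hAbdd : BddAbove A := ⟨y, fun s hs => hs.2.2.1⟩
    set u := sSup A with hu
    have huS : u ∈ S := by
      have h1 : u ∈ closure A := csSup_mem_closure hAne hAbdd
      have h2 : closure A ⊆ S := by
        calc closure A ⊆ closure S := closure_mono (fun s hs => hs.1)
          _ = S := hS.closure_eq
      exact h2 h1
    have hxu : x ≤ u := le_csSup hAbdd hxA
    have huy : u ≤ y := csSup_le hAne (fun s hs => hs.2.2.1)
    obtain ⟨du, hdu⟩ : ∃ d, deltaDiffAt S f u d := by
      rcases lt_or_eq_of_le huy with h | h
      · exact ⟨0, hder u huS hxu h⟩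
      · exact h ▸ hdy
    have huA : u ∈ A := by
      refine ⟨huS, hxu, huy, ?_⟩
      refine le_of_forall_pos_le_add ?_
      intro η hη
      set μ := tsSigma S u - u with hμdef
      have hμ0 : 0 ≤ μ := sub_nonneg.2 (le_tsSigma S u)
      obtain ⟨δ, hδ0, hδ⟩ := hdu (η / (2 * (μ + 1))) (by positivity)
      set δ' := min (min δ 1) (η / (2 * (‖du‖ + 1))) with hδ'def
      have hδ'0 : 0 < δ' := lt_min (lt_min hδ0 one_pos) (by positivity)
      obtain ⟨s, hsA, hs_gt⟩ := exists_lt_of_lt_csSup hAne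
        (show u - δ' < sSup A by rw [← hu]; linarith)
      have hsu : s ≤ u := le_csSup hAbdd hsA
      have hδ'1 : δ' ≤ δ := le_trans (min_le_left _ _) (min_le_left _ _)
      have hδ'2 : δ' ≤ 1 := le_trans (min_le_left _ _) (min_le_right _ _)
      have hδ'3 : δ' ≤ η / (2 * (‖du‖ + 1)) := min_le_right _ _
      have hX := hδ s ⟨hsA.1, by constructor <;> linarith⟩
      have habs : |tsSigma S u - s| = μ + (u - s) := by
        rw [abs_of_nonneg (by linarith)]; ring
      rw [habs] at hX
      have hjump := jump_eq huS hdu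
      have hsplit : f u - f s =
          (f (tsSigma S u) - f s - (tsSigma S u - s) • du) + (u - s) • du := by
        rw [hjump, ← hμdef]
        have h9 : (tsSigma S u - s) = μ + (u - s) := by rw [hμdef]; ring
        rw [h9, add_smul]
        abel
      have hfs : ‖f u - f s‖ ≤ η := by
        rw [hsplit]
        have h1 := norm_add_le (f (tsSigma S u) - f s - (tsSigma S u - s) • du)
          ((u - s) • du)
        have h2 : ‖(u - s) • du‖ = (u - s) * ‖du‖ := by
          rw [norm_smul, Real.norm_eq_abs, abs_of_nonneg (by linarith)]
        have h3 : η / (2 * (μ + 1)) * (μ + (u - s)) ≤ η / 2 := by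
          rw [div_mul_eq_mul_div, div_le_div_iff₀ (by positivity) (by norm_num)]
          nlinarith
        have h4 : (u - s) * ‖du‖ ≤ η / 2 := by
          have hd0 : (0:ℝ) ≤ ‖du‖ := norm_nonneg du
          calc (u - s) * ‖du‖ ≤ η / (2 * (‖du‖ + 1)) * ‖du‖ := by
                apply mul_le_mul_of_nonneg_right (by linarith) hd0
            _ ≤ η / 2 := by
                rw [div_mul_eq_mul_div, div_le_div_iff₀ (by positivity) (by norm_num)]
                nlinarith
        calc ‖(f (tsSigma S u) - f s - (tsSigma S u - s) • du) + (u - s) • du‖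
            ≤ ‖f (tsSigma S u) - f s - (tsSigma S u - s) • du‖ + ‖(u - s) • du‖ := h1
          _ ≤ η / (2 * (μ + 1)) * (μ + (u - s)) + (u - s) * ‖du‖ := by
              rw [h2]; exact add_le_add hX (le_refl _)
          _ ≤ η / 2 + η / 2 := add_le_add h3 h4
          _ = η := by ring
      calc ‖f u - f x‖ = ‖(f u - f s) + (f s - f x)‖ := by congr 1; abel
        _ ≤ ‖f u - f s‖ + ‖f s - f x‖ := norm_add_le _ _
        _ ≤ η + ε * (s - x) := add_le_add hfs hsA.2.2.2
        _ ≤ ε * (u - x) + η := by nlinarith [hsA.2.1]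
    rcases lt_or_eq_of_le huy with hlt | heq
    · exfalso
      have hd0 : deltaDiffAt S f u 0 := hder u huS hxu hlt
      have hjump : f (tsSigma S u) = f u := by
        have := jump_eq huS hd0; simpa using this
      rcases lt_or_eq_of_le (le_tsSigma S u) with hσlt | hσeq
      · -- right-scattered: σ u ∈ A and σ u > u
        have hσS : tsSigma S u ∈ S := tsSigma_mem hS huS
        have hσy : tsSigma S u ≤ y := tsSigma_le hy hlt
        have hmem : tsSigma S u ∈ A := by
          refine ⟨hσS, le_trans hxu (le_of_lt hσlt), hσy, ?_⟩
          rw [hjump]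
          calc ‖f u - f x‖ ≤ ε * (u - x) := huA.2.2.2
            _ ≤ ε * (tsSigma S u - x) := by nlinarith
        have := le_csSup hAbdd hmem
        rw [← hu] at this
        linarith
      · -- right-dense
        obtain ⟨δ, hδ0, hδ⟩ := hd0 ε hε
        have hne2 : {v | v ∈ S ∧ u < v}.Nonempty := ⟨y, hy, hlt⟩
        have hinf : sInf {v | v ∈ S ∧ u < v} = u := by
          have h9 : tsSigma S u = sInf {v | v ∈ S ∧ u < v} := by
            unfold tsSigma; rw [if_pos hne2]
          rw [← h9, ← hσeq]
        have hδ2 : (0:ℝ) < min δ (y - u) := lt_min hδ0 (by linarith)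
        obtain ⟨s, hs, hslt⟩ := exists_lt_of_csInf_lt hne2
          (show sInf {v | v ∈ S ∧ u < v} < u + min δ (y - u) by rw [hinf]; linarith)
        have hsδ : s < u + δ := lt_of_lt_of_le hslt (by
          have := min_le_left δ (y - u); linarith)
        have hsy : s ≤ y := le_of_lt (lt_of_lt_of_le hslt (by
          have := min_le_right δ (y - u); linarith))
        have hcl := hδ s ⟨hs.1, by constructor <;> [linarith [hs.2]; linarith]⟩
        rw [← hσeq] at hcl
        simp only [smul_zero, sub_zero] at hcl
        have habs : |u - s| = s - u := by
          rw [abs_of_nonpos (by linarith [hs.2])]; ring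
        rw [habs] at hcl
        have hmem : s ∈ A := by
          refine ⟨hs.1, le_trans hxu (le_of_lt hs.2), hsy, ?_⟩
          calc ‖f s - f x‖ = ‖(f s - f u) + (f u - f x)‖ := by congr 1; abel
            _ ≤ ‖f s - f u‖ + ‖f u - f x‖ := norm_add_le _ _
            _ ≤ ε * (s - u) + ε * (u - x) := by
                refine add_le_add ?_ huA.2.2.2
                rw [← norm_neg]; simpa using hcl
            _ = ε * (s - x) := by ring
        have := le_csSup hAbdd hmem
        rw [← hu] at this
        linarith [hs.2]
    · rw [← heq]
      exact huA.2.2.2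
  have : f y - f x = 0 :=
    norm_eq_zero_of_forall_mul (by linarith) main
  rw [sub_eq_zero] at this
  exact this.symm


/-- Coverage: if `f ∘ σ` vanishes at points of `[q, M)`, then `f` vanishes above `q`. -/
lemma vanish_of_sigma_vanish {S : Set ℝ} {f : ℝ → E} (hS : IsClosed S)
    {M q : ℝ} (hMub : ∀ u ∈ S, u ≤ M) (hq : q ∈ S)
    (h : ∀ t ∈ S, q ≤ t → t < M → f (tsSigma S t) = 0)
    (hdiff : ∀ s ∈ S, tsRho S s = s → ∃ d, deltaDiffAt S f s d) :
    ∀ s ∈ S, q < s → f s = 0 := by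
  intro s hsS hqs
  have hsM : s ≤ M := hMub s hsS
  have hLne : {v | v ∈ S ∧ v < s}.Nonempty := ⟨q, hq, hqs⟩
  have hLbdd : BddAbove {v | v ∈ S ∧ v < s} := ⟨s, fun x hx => le_of_lt hx.2⟩
  rcases lt_or_eq_of_le (tsRho_le S s) with hρ | hρ
  · -- left-scattered
    set t := tsRho S s with htdef
    have htS : t ∈ S := tsRho_mem hS hsS
    have htq : q ≤ t := le_tsRho hq hqs
    have htM : t < M := lt_of_lt_of_le hρ hsM
    have hσt : tsSigma S t = s := by
      have hne : {u | u ∈ S ∧ t < u}.Nonempty := ⟨s, hsS, hρ⟩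
      unfold tsSigma
      rw [if_pos hne]
      apply le_antisymm
      · exact csInf_le ⟨t, fun x hx => le_of_lt hx.2⟩ ⟨hsS, hρ⟩
      · apply le_csInf hne
        intro u hu
        by_contra hc
        push_neg at hc
        exact absurd (le_tsRho hu.1 hc) (not_le.2 hu.2)
    have := h t htS htq htM
    rwa [hσt] at this
  · -- left-dense
    have hρeq : tsRho S s = s := hρ
    apply norm_eq_zero_of_forall
    intro η hη
    obtain ⟨d, hd⟩ := hdiff s hsS hρeq
    obtain ⟨δ₁, hδ₁0, hδ₁⟩ := left_cont hsS hd hη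
    have hsupL : sSup {v | v ∈ S ∧ v < s} = s := by
      have : tsRho S s = sSup {v | v ∈ S ∧ v < s} := by
        unfold tsRho; rw [if_pos hLne]
      rw [← this, hρeq]
    obtain ⟨t, htL, htgt⟩ := exists_lt_of_lt_csSup hLne
      (show max (s - δ₁) q < sSup {v | v ∈ S ∧ v < s} by
        rw [hsupL]; exact max_lt (by linarith) hqs)
    have htq : q < t := lt_of_le_of_lt (le_max_right _ _) htgt
    have htδ : s - δ₁ < t := lt_of_le_of_lt (le_max_left _ _) htgt
    have htM : t < M := lt_of_lt_of_le htL.2 hsM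
    have hfσ : f (tsSigma S t) = 0 := h t htL.1 (le_of_lt htq) htM
    have hσle : tsSigma S t ≤ s := tsSigma_le hsS htL.2
    have hσgt : s - δ₁ < tsSigma S t := lt_of_lt_of_le htδ (le_tsSigma S t)
    have hσS : tsSigma S t ∈ S := tsSigma_mem hS htL.1
    have := hδ₁ (tsSigma S t) hσS hσgt hσle
    rw [hfσ, sub_zero] at this
    exact this
  
/-- The σ-iterates of the minimum exhaust a small time scale. -/
lemma sigma_iter_lt {S : Set ℝ} (hS : IsClosed S) {A M : ℝ} (hA : A ∈ S) (hM : M ∈ S)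
    (hlb : ∀ u ∈ S, A ≤ u) (hub : ∀ u ∈ S, u ≤ M) {k : ℕ}
    (hcard : ∃ F : Finset ℝ, ↑F ⊆ S ∧ k + 2 ≤ F.card) :
    (tsSigma S)^[k] A < M := by
  classical
  have hiter : ∀ j : ℕ, (tsSigma S)^[j] A ∈ S := by
    intro j
    induction j with
    | zero => exact hA
    | succ j ih => rw [Function.iterate_succ_apply']; exact tsSigma_mem hS ih
  rcases lt_or_eq_of_le (hub _ (hiter k)) with h | h
  · exact h
  · exfalso
    obtain ⟨F, hFS, hFcard⟩ := hcard
    have hcover : ∀ j : ℕ, ∀ u ∈ S, u ≤ (tsSigma S)^[j] A →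
        u ∈ (Finset.range (j+1)).image (fun i => (tsSigma S)^[i] A) := by
      intro j
      induction j with
      | zero =>
        intro u huS hle
        simp only [Function.iterate_zero_apply] at hle
        have : u = A := le_antisymm hle (hlb u huS)
        simp [this]
      | succ j ih =>
        intro u huS hle
        rcases le_or_gt u ((tsSigma S)^[j] A) with h1 | h1
        · have := ih u huS h1
          simp only [Finset.mem_image, Finset.mem_range] at this ⊢
          obtain ⟨i, hi, hieq⟩ := this
          exact ⟨i, by omega, hieq⟩
        · have h2 : (tsSigma S)^[j+1] A ≤ u := by
            rw [Function.iterate_succ_apply']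
            exact tsSigma_le huS h1
          have : u = (tsSigma S)^[j+1] A := le_antisymm hle h2
          simp only [Finset.mem_image, Finset.mem_range]
          exact ⟨j+1, by omega, this.symm⟩
    have hsub : F ⊆ (Finset.range (k+1)).image (fun i => (tsSigma S)^[i] A) := by
      intro u huF
      exact hcover k u (hFS huF) (by rw [h]; exact hub u (hFS huF))
    have h1 := Finset.card_le_card hsub
    have h2 := Finset.card_image_le (s := Finset.range (k+1))
      (f := fun i => (tsSigma S)^[i] A)
    rw [Finset.card_range] at h2
    omega

/-- σ of a truncated time scale agrees with σ of the ambient one below the cut. -/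
lemma tsSigma_inter_Iic {T : Set ℝ} (hT : IsClosed T) {c t : ℝ} (hc : c ∈ T)
    (htc : t < c) : tsSigma T t = tsSigma (T ∩ Iic c) t := by
  set S := T ∩ Iic c with hSdef
  have hcS : c ∈ S := ⟨hc, le_refl c⟩
  have hneT : {u | u ∈ T ∧ t < u}.Nonempty := ⟨c, hc, htc⟩
  have hneS : {u | u ∈ S ∧ t < u}.Nonempty := ⟨c, hcS, htc⟩
  have hTeq : tsSigma T t = sInf {u | u ∈ T ∧ t < u} := by
    unfold tsSigma; rw [if_pos hneT]
  have hSeq : tsSigma S t = sInf {u | u ∈ S ∧ t < u} := by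
    unfold tsSigma; rw [if_pos hneS]
  have hbddT : BddBelow {u | u ∈ T ∧ t < u} := ⟨t, fun x hx => le_of_lt hx.2⟩
  have h1 : tsSigma T t ≤ tsSigma S t := by
    rw [hTeq, hSeq]
    exact csInf_le_csInf hbddT hneS (fun x hx => ⟨hx.1.1, hx.2⟩)
  apply le_antisymm h1
  have hTc : tsSigma T t ≤ c := by rw [hTeq]; exact csInf_le hbddT ⟨hc, htc⟩
  have hTt : t ≤ tsSigma T t := le_tsSigma T t
  rcases lt_or_eq_of_le hTt with h2 | h2
  · have hmemT : tsSigma T t ∈ T := by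
      rw [hTeq]
      have hcl := csInf_mem_closure hneT hbddT
      have : closure {u | u ∈ T ∧ t < u} ⊆ T := by
        calc closure {u | u ∈ T ∧ t < u} ⊆ closure T := closure_mono (fun x hx => hx.1)
          _ = T := hT.closure_eq
      exact this hcl
    have hmemS : tsSigma T t ∈ {u | u ∈ S ∧ t < u} := ⟨⟨hmemT, hTc⟩, h2⟩
    rw [hSeq]
    exact csInf_le ⟨t, fun x hx => le_of_lt hx.2⟩ hmemS
  · -- tsSigma T t = t
    rw [hSeq, ← h2]
    apply le_of_forall_pos_le_add
    intro ε hε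
    have hδ : (0:ℝ) < min ε (c - t) := lt_min hε (by linarith)
    obtain ⟨u, hu, hult⟩ := exists_lt_of_csInf_lt hneT
      (show sInf {u | u ∈ T ∧ t < u} < t + min ε (c - t) by rw [← hTeq, ← h2]; linarith)
    have huc : u ≤ c := by
      have := min_le_right ε (c - t); linarith
    have huS : u ∈ {v | v ∈ S ∧ t < v} := ⟨⟨hu.1, huc⟩, hu.2⟩
    have := csInf_le ⟨t, fun x hx => le_of_lt hx.2⟩ huS
    have hue : u < t + ε := by
      have := min_le_left ε (c - t); linarith
    linarith [csInf_le (⟨t, fun x (hx : x ∈ {v | v ∈ S ∧ t < v}) => le_of_lt hx.2⟩ :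
      BddBelow {v | v ∈ S ∧ t < v}) huS]

/-- Points of `T` above the m-th backward jump of the top are backward-jump iterates. -/
lemma mem_rho_iter {T : Set ℝ} {b : ℝ} (hub : ∀ u ∈ T, u ≤ b) :
    ∀ m : ℕ, ∀ u ∈ T, (tsRho T)^[m] b < u →
      u ∈ (Finset.range m).image (fun j => (tsRho T)^[j] b) := by
  intro m
  induction m with
  | zero =>
    intro u huT hlt
    simp only [Function.iterate_zero_apply] at hlt
    exact absurd (hub u huT) (not_le.2 hlt)
  | succ m ih =>
    intro u huT hlt
    rw [Function.iterate_succ_apply'] at hlt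
    rcases le_or_gt u ((tsRho T)^[m] b) with h1 | h1
    · have : u = (tsRho T)^[m] b := by
        rcases lt_or_eq_of_le h1 with h2 | h2
        · exact absurd (le_tsRho huT h2) (not_le.2 hlt)
        · exact h2
      simp only [Finset.mem_image, Finset.mem_range]
      exact ⟨m, by omega, this.symm⟩
    · have := ih u huT h1
      simp only [Finset.mem_image, Finset.mem_range] at this ⊢
      obtain ⟨j, hj, hjeq⟩ := this
      exact ⟨j, by omega, hjeq⟩


end ELemmas

end HOATS

open HOATS

theorem higher_order_abnormal_system_trivial
    {n r : ℕ} (hn : 1 ≤ n) (hr : 1 ≤ r)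
    (T₀ : Set ℝ) (hT₀closed : IsClosed T₀)
    (a b : ℝ) (ha : a ∈ T₀) (hb : b ∈ T₀) (hab : a < b)
    (T : Set ℝ) (hT : T = Icc a b ∩ T₀)
    (hcard : ∃ s : Finset ℝ, ↑s ⊆ T ∧ s.card = 2 * r + 1)
    (T' : Set ℝ) (hT' : T' = Icc a ((tsRho T)^[r - 1] b) ∩ T₀)
    (ψ ψd : ℕ → ℝ → En n)
    (hdiff : ∀ i < r, ∀ t ∈ tsTk T', deltaDiffAt T' (ψ i) t (ψd i t))
    (h0 : ∀ t ∈ tsTk T', ψd 0 t = 0)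
    (hi : ∀ i, 1 ≤ i → i < r → ∀ t ∈ tsTk T', ψd i t = -ψ (i - 1) (tsSigma T t))
    (hlast : ∀ t ∈ tsTk T', ψ (r - 1) (tsSigma T t) = 0) :
    ∀ i < r, ∀ t ∈ tsTk T', ψ i t = 0 := by
  classical
  set c : ℝ := (tsRho T)^[r-1] b with hcdef
  have hTclosed : IsClosed T := by rw [hT]; exact isClosed_Icc.inter hT₀closed
  have hTsub : T ⊆ Icc a b := by rw [hT]; exact inter_subset_left
  have hbT : b ∈ T := by rw [hT]; exact ⟨⟨le_of_lt hab, le_refl b⟩, hb⟩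
  have hTub : ∀ u ∈ T, u ≤ b := fun u hu => (hTsub hu).2
  have hcT : c ∈ T := by
    rw [hcdef]
    generalize (r - 1) = k
    induction k with
    | zero => exact hbT
    | succ k ih => rw [Function.iterate_succ_apply']; exact tsRho_mem hTclosed ih
  have hca : a ≤ c := (hTsub hcT).1
  have hcb : c ≤ b := (hTsub hcT).2
  have hSeq : T' = T ∩ Iic c := by
    rw [hT', hT]
    ext u
    constructor
    · rintro ⟨⟨h1, h2⟩, h3⟩
      exact ⟨⟨⟨h1, le_trans h2 hcb⟩, h3⟩, h2⟩
    · rintro ⟨⟨⟨h1, _⟩, h3⟩, h4⟩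
      exact ⟨⟨h1, h4⟩, h3⟩
  have hSclosed : IsClosed T' := by rw [hT']; exact isClosed_Icc.inter hT₀closed
  have haS : a ∈ T' := by rw [hT']; exact ⟨⟨le_refl a, hca⟩, ha⟩
  have hcS : c ∈ T' := by rw [hSeq]; exact ⟨hcT, le_refl c⟩
  have hSub : ∀ u ∈ T', u ≤ c := by
    intro u hu; rw [hSeq] at hu; exact hu.2
  have hSlow : ∀ u ∈ T', a ≤ u := by
    intro u hu; rw [hT'] at hu; exact hu.1.1
  have hbdd : BddAbove T' := ⟨c, hSub⟩
  have hsup : sSup T' = c := le_antisymm (csSup_le ⟨a, haS⟩ hSub) (le_csSup hbdd hcS)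
  have hKlt : ∀ t ∈ T', t < c → t ∈ tsTk T' := by
    intro t ht hlt
    exact mem_tsTk_of_lt hbdd ht (by rw [hsup]; exact hlt)
  have hdenseK : ∀ s ∈ T', tsRho T' s = s → s ∈ tsTk T' := by
    intro s hs hρ
    rcases lt_or_eq_of_le (hSub s hs) with h | h
    · exact hKlt s hs h
    · apply mem_tsTk_of_rho_max _ hs
      rw [hsup, ← h, hρ]
  have hsigeq : ∀ t ∈ T', t < c → tsSigma T t = tsSigma T' t := by
    intro t _ hlt
    rw [hSeq]
    exact tsSigma_inter_Iic hTclosed hcT hlt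
  -- cardinality
  obtain ⟨F, hFS, hFcard⟩ : ∃ F : Finset ℝ, ↑F ⊆ T' ∧ r + 2 ≤ F.card := by
    obtain ⟨F₀, hF₀T, hF₀card⟩ := hcard
    refine ⟨F₀.filter (fun u => u ≤ c), ?_, ?_⟩
    · intro u hu
      simp only [Finset.coe_filter, mem_setOf_eq] at hu
      rw [hSeq]
      exact ⟨hF₀T hu.1, hu.2⟩
    · have hneg : F₀.filter (fun u => ¬ u ≤ c) ⊆
          (Finset.range (r-1)).image (fun j => (tsRho T)^[j] b) := by
        intro u hu
        rw [Finset.mem_filter] at hu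
        exact mem_rho_iter hTub (r-1) u (hF₀T hu.1) (lt_of_not_ge hu.2)
      have h1 := Finset.card_filter_add_card_filter_not
        (s := F₀) (fun u => u ≤ c)
      have h2 := Finset.card_le_card hneg
      have h3 := Finset.card_image_le (s := Finset.range (r-1))
        (f := fun j => (tsRho T)^[j] b)
      rw [Finset.card_range] at h3
      omega
  have hiterS : ∀ k : ℕ, (tsSigma T')^[k] a ∈ T' := by
    intro k
    induction k with
    | zero => exact haS
    | succ k ih => rw [Function.iterate_succ_apply']; exact tsSigma_mem hSclosed ih
  have hiterlt : ∀ k : ℕ, k ≤ r → (tsSigma T')^[k] a < c :=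
    fun k hk => sigma_iter_lt hSclosed haS hcS hSlow hSub
      ⟨F, hFS, le_trans (show k + 2 ≤ r + 2 by omega) hFcard⟩
  have hitermono : ∀ j k : ℕ, j ≤ k → (tsSigma T')^[j] a ≤ (tsSigma T')^[k] a := by
    intro j k hjk
    exact monotone_nat_of_le_succ (f := fun m => (tsSigma T')^[m] a)
      (fun m => by
        show (tsSigma T')^[m] a ≤ (tsSigma T')^[m+1] a
        rw [Function.iterate_succ_apply']; exact le_tsSigma _ _) hjk
  -- downward induction
  have key : ∀ m : ℕ, m ≤ r - 1 → ∀ s ∈ T', (tsSigma T')^[m] a < s →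
      ψ (r - 1 - m) s = 0 := by
    intro m
    induction m with
    | zero =>
      intro _
      simp only [Function.iterate_zero_apply, Nat.sub_zero]
      apply vanish_of_sigma_vanish hSclosed hSub haS
      · intro t htS _ htc
        have := hlast t (hKlt t htS htc)
        rwa [hsigeq t htS htc] at this
      · intro s hs hρ
        exact ⟨ψd (r-1) s, hdiff (r-1) (by omega) s (hdenseK s hs hρ)⟩
    | succ m ih =>
      intro hm1
      have ihm := ih (by omega)
      set i := r - 1 - m with hidef
      have hi1 : 1 ≤ i := by omega
      have hir : i < r := by omega
      have hieq : r - 1 - (m+1) = i - 1 := by omega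
      rw [hieq]
      set q := (tsSigma T')^[m] a with hqdef
      have hqS : q ∈ T' := hiterS m
      have hq' : (tsSigma T')^[m+1] a = tsSigma T' q := Function.iterate_succ_apply' _ _ _
      rw [hq']
      have hq'S : tsSigma T' q ∈ T' := tsSigma_mem hSclosed hqS
      apply vanish_of_sigma_vanish hSclosed hSub hq'S
      · intro t htS htq htc
        have htk : t ∈ tsTk T' := hKlt t htS htc
        have hqt : q ≤ t := le_trans (le_tsSigma _ _) htq
        have hdz : ψd i t = 0 := by
          apply deriv_zero_of_vanish hSclosed htS ⟨c, hcS, htc⟩ (hdiff i hir t htk)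
          · intro s hs hts
            exact ihm s hs (lt_of_le_of_lt hqt hts)
          · rcases lt_or_eq_of_le hqt with h | h
            · exact Or.inr (ihm t htS h)
            · left
              subst h
              exact le_antisymm htq (le_tsSigma _ _)
        have hval := hi i hi1 hir t htk
        rw [hdz, hsigeq t htS htc] at hval
        have := hval.symm
        rwa [neg_eq_zero] at this
      · intro s hs hρ
        exact ⟨ψd (i-1) s, hdiff (i-1) (by omega) s (hdenseK s hs hρ)⟩
  -- the maximal point of T'^k
  obtain ⟨y, hy1, hy2, hyS, hy3⟩ :
      ∃ y, y ∈ tsTk T' ∧ (∀ t ∈ tsTk T', t ≤ y) ∧ y ∈ T' ∧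
        (tsSigma T')^[r-1] a < y := by
    by_cases hde : tsRho T' c = c
    · refine ⟨c, mem_tsTk_of_rho_max (by rw [hsup]; exact hde) hcS, ?_, hcS,
        hiterlt (r-1) (by omega)⟩
      intro t ht
      exact hSub t ht.1
    · have hρS : tsRho T' c ∈ T' := tsRho_mem hSclosed hcS
      have hρlt : tsRho T' c < c := lt_of_le_of_ne (tsRho_le _ _) hde
      refine ⟨tsRho T' c, hKlt _ hρS hρlt, ?_, hρS, ?_⟩
      · intro t ht
        by_contra hgt
        push_neg at hgt
        exact ht.2 ⟨by rw [hsup]; exact hgt, by rw [hsup]; exact hSub t ht.1⟩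
      · have h1 : (tsSigma T')^[r] a < c := hiterlt r (le_refl r)
        by_contra hge
        push_neg at hge
        have h2 : (tsSigma T')^[r-1] a ∈ T' := hiterS _
        have h3 : (tsSigma T')^[r-1] a ≤ c := hSub _ h2
        have hrw : (tsSigma T')^[r] a = tsSigma T' ((tsSigma T')^[r-1] a) := by
          conv_lhs => rw [show r = (r-1)+1 by omega]
          exact Function.iterate_succ_apply' _ _ _
        rcases lt_or_eq_of_le h3 with hlt | heqc
        · have hle2 : (tsSigma T')^[r-1] a ≤ tsRho T' c := le_tsRho h2 hlt
          have heq2 : (tsSigma T')^[r-1] a = tsRho T' c := le_antisymm hle2 hge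
          rw [hrw, heq2, tsSigma_tsRho_max hcS hρlt] at h1
          exact lt_irrefl _ h1
        · rw [hrw, heqc, tsSigma_max hSub] at h1
          exact lt_irrefl _ h1
  -- upward induction
  intro i
  induction i with
  | zero =>
    intro _ t ht
    have hder : ∀ u ∈ T', t ≤ u → u < y → deltaDiffAt T' (ψ 0) u (0 : En n) := by
      intro u huS _ huy
      have huk : u ∈ tsTk T' := mem_tsTk_of_le hbdd hy1 huS (le_of_lt huy)
      have hd := hdiff 0 (by omega) u huk
      rwa [h0 u huk] at hd
    have heq := eq_of_deriv_zero hSclosed ht.1 hyS (hy2 t ht) hder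
      ⟨ψd 0 y, hdiff 0 (by omega) y hy1⟩
    rw [heq]
    have hkey := key (r-1) (le_refl _) y hyS hy3
    rwa [Nat.sub_self] at hkey
  | succ i IH =>
    intro hir t ht
    have hprev := IH (by omega)
    have hder : ∀ u ∈ T', t ≤ u → u < y → deltaDiffAt T' (ψ (i+1)) u (0 : En n) := by
      intro u huS _ huy
      have huk : u ∈ tsTk T' := mem_tsTk_of_le hbdd hy1 huS (le_of_lt huy)
      have hd := hdiff (i+1) hir u huk
      have hσk : tsSigma T' u ∈ tsTk T' :=
        mem_tsTk_of_le hbdd hy1 (tsSigma_mem hSclosed huS) (tsSigma_le hyS huy)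
      have hval := hi (i+1) (by omega) hir u huk
      rw [hsigeq u huS (lt_of_lt_of_le huy (hSub y hyS))] at hval
      simp only [Nat.add_sub_cancel] at hval
      rw [hval, hprev (tsSigma T' u) hσk, neg_zero] at hd
      exact hd
    have heq := eq_of_deriv_zero hSclosed ht.1 hyS (hy2 t ht) hder
      ⟨ψd (i+1) y, hdiff (i+1) hir y hy1⟩
    rw [heq]
    have hkey := key (r-1-(i+1)) (by omega) y hyS
      (lt_of_le_of_lt (hitermono _ _ (by omega)) hy3)
    rwa [show r - 1 - (r-1-(i+1)) = i + 1 by omega] at hkey
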